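/- Let γ, ξ : [0,∞) → ℝ^d be two solutions of the Dyson Brownian motion SDE dλ_i(t) = dB_{ii}(t) + β·Σ_{j≠i} dt/(λ_i(t) − λ_j(t)) (β ≥ 1) driven by the same Brownian motions, and suppose at some time t the gaps satisfy γ_i(t) − γ_{i+1}(t) = ξ_i(t) − ξ_{i+1}(t) > 0 for a fixed index i, and γ_j(t) − γ_{j+1}(t) ≥ ξ_j(t) − ξ_{j+1}(t) > 0 for all j. Then the drift of the i-th gap of γ dominates that of ξ: Σ_{j∉{i,i+1}} [1/(γ_i(t) − γ_j(t)) − 1/(γ_{i+1}(t) − γ_j(t))] ≥ Σ_{j∉{i,i+1}} [1/(ξ_i(t) − ξ_j(t)) − 1/(ξ_{i+1}(t) − ξ_j(t))]. -/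

import Mathlib

/-!
The `i`-th gap drift is a sum over `j ∉ {i, i+1}` of terms `1/(a+c) - 1/c`, where `a` is the
common `i`-th gap and `c` is the distance from the `j`-th particle to the nearer of particles
`i`, `i+1`. Since `c ↦ 1/(a+c) - 1/c` is monotone for `a ≥ 0`, it suffices that these distances
are larger for `γ` than for `ξ`, which follows by summing the consecutive gap inequalities.
-/

lemma one_div_add_sub_one_div_le_of_le {a b c : ℝ} (ha : 0 ≤ a) (hc : 0 < c) (hcb : c ≤ b) :
    1 / (a + c) - 1 / c ≤ 1 / (a + b) - 1 / b := by
  have hb : 0 < b := hc.trans_le hcb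
  rw [div_sub_div _ _ (by positivity) hc.ne', div_sub_div _ _ (by positivity) hb.ne',
    div_le_div_iff₀ (by positivity) (by positivity)]
  have : (a + c) * c ≤ (a + b) * b := mul_le_mul (by linarith) hcb hc.le (by positivity)
  nlinarith [mul_le_mul_of_nonneg_left this ha]

lemma one_div_sub_sub_one_div_sub_eq_neg (p q r : ℝ) :
    1 / (p - r) - 1 / (q - r) = 1 / ((p - q) + (r - p)) - 1 / (r - p) := by
  rw [show p - r = -(r - p) by ring, show q - r = -((p - q) + (r - p)) by ring,
    div_neg, div_neg]
  ring

lemma one_div_sub_sub_one_div_sub_eq (p q r : ℝ) :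
    1 / (p - r) - 1 / (q - r) = 1 / ((p - q) + (q - r)) - 1 / (q - r) := by
  ring

namespace Fin

variable {α : Type*} [Preorder α] {d : ℕ} {f : Fin d → α}

lemma antitone_of_succ_le (hf : ∀ (j : Fin d) (hj : (j : ℕ) + 1 < d), f ⟨j + 1, hj⟩ ≤ f j) :
    Antitone f := by
  cases d with
  | zero => exact fun a => a.elim0
  | succ n => exact antitone_iff_succ_le.2 fun j => hf j.castSucc (by simp)

lemma strictAnti_of_succ_lt (hf : ∀ (j : Fin d) (hj : (j : ℕ) + 1 < d), f ⟨j + 1, hj⟩ < f j) :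
    StrictAnti f := by
  cases d with
  | zero => exact fun a => a.elim0
  | succ n => exact strictAnti_iff_succ_lt.2 fun j => hf j.castSucc (by simp)

end Fin

/-- Drift comparison for Dyson Brownian motion gaps (deterministic core): if the vectors
`g = γ(t)` and `x = ξ(t)` have strictly positive consecutive gaps, every gap of `g`
dominates the corresponding gap of `x`, and the `i`-th gaps are equal, then the drift of
the `i`-th gap of `g` dominates that of `x`:
`Σ_{j∉{i,i+1}} [1/(g_i − g_j) − 1/(g_{i+1} − g_j)] ≥ Σ_{j∉{i,i+1}} [1/(x_i − x_j) − 1/(x_{i+1} − x_j)]`. -/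
theorem stmt_17 {d : ℕ} (g x : Fin d → ℝ) (i : Fin d) (hi : (i : ℕ) + 1 < d)
    (hgap_i : g i - g ⟨(i : ℕ) + 1, hi⟩ = x i - x ⟨(i : ℕ) + 1, hi⟩)
    (hpos_i : 0 < x i - x ⟨(i : ℕ) + 1, hi⟩)
    (hgaps : ∀ j : Fin d, ∀ hj : (j : ℕ) + 1 < d,
      0 < x j - x ⟨(j : ℕ) + 1, hj⟩ ∧
      x j - x ⟨(j : ℕ) + 1, hj⟩ ≤ g j - g ⟨(j : ℕ) + 1, hj⟩) :
    ∑ j ∈ (Finset.univ.erase i).erase ⟨(i : ℕ) + 1, hi⟩,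
        (1 / (x i - x j) - 1 / (x ⟨(i : ℕ) + 1, hi⟩ - x j))
      ≤ ∑ j ∈ (Finset.univ.erase i).erase ⟨(i : ℕ) + 1, hi⟩,
        (1 / (g i - g j) - 1 / (g ⟨(i : ℕ) + 1, hi⟩ - g j)) := by
  set i' : Fin d := ⟨(i : ℕ) + 1, hi⟩
  have hx : StrictAnti x :=
    Fin.strictAnti_of_succ_lt fun j hj => sub_pos.1 (hgaps j hj).1
  have hgx : Antitone (g - x) :=
    Fin.antitone_of_succ_le fun j hj => by simp only [Pi.sub_apply]; linarith [(hgaps j hj).2]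
  refine Finset.sum_le_sum fun j hj => ?_
  simp only [Finset.mem_erase, Finset.mem_univ, and_true] at hj
  obtain hji | hij : j < i ∨ i' < j := by
    simp only [i', ne_eq, Fin.ext_iff, Fin.lt_def] at hj ⊢; omega
  · have hxji : x j - x i ≤ g j - g i := by
      have := hgx hji.le; simp only [Pi.sub_apply] at this; linarith
    rw [one_div_sub_sub_one_div_sub_eq_neg, one_div_sub_sub_one_div_sub_eq_neg (g i), hgap_i]
    exact one_div_add_sub_one_div_le_of_le hpos_i.le (sub_pos.2 (hx hji)) hxji
  · have hxi'j : x i' - x j ≤ g i' - g j := by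
      have := hgx hij.le; simp only [Pi.sub_apply] at this; linarith
    rw [one_div_sub_sub_one_div_sub_eq, one_div_sub_sub_one_div_sub_eq (g i), hgap_i]
    exact one_div_add_sub_one_div_le_of_le hpos_i.le (sub_pos.2 (hx hij)) hxi'j
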